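/- Let Q be a countable state space, P a stochastic matrix, π a stationary distribution, ℓ : Q → Σ a labeling, f : Σ^n → [a,b], and t ≥ n, N = t − n + 1. Then E over state paths q ∈ Q^t (with probability π(q₁)∏ P(q_j,q_{j+1})) of (1/N) Σ_{i=1}^N f(ℓ(q_i),...,ℓ(q_{i+n-1})) equals Σ_{q^B ∈ Q^n} f(ℓ(q₁^B),...,ℓ(q_n^B)) · π(q₁^B) · ∏_{j=1}^{n-1} P(q_j^B, q_{j+1}^B). -/

import Mathlib

open scoped Classical

/-- Path probability of a finite state sequence under initial distribution `π`
and transition matrix `P`. -/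
noncomputable def pathProb {Q : Type*} (π : Q → ℝ) (P : Q → Q → ℝ) (t : ℕ) (ht : 1 ≤ t)
    (w : Fin t → Q) : ℝ :=
  π (w ⟨0, ht⟩) *
    ∏ j : Fin (t - 1),
      P (w ⟨j.val, by have := j.isLt; omega⟩) (w ⟨j.val + 1, by have := j.isLt; omega⟩)

/-!
Stationarity makes every window of `n` consecutive states of a path distributed like the
first `n` states, i.e. with weight `π(q₁) ∏ P(q_j, q_{j+1})`: summing out the last state of a
path uses that the rows of `P` sum to `1`, summing out the first one uses `π P = π`. Averaging
over the `t - n + 1` windows then gives the claim. The marginal identities are proved in `ℝ≥0∞`,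
where sums need no summability side conditions, and transferred to the bounded real `f` through
`f = (f - a) + a` with `0 ≤ f - a ≤ b - a`.
-/

open scoped ENNReal

section PathWeight

variable {Q : Type*} (μ : Q → ℝ≥0∞) (K : Q → Q → ℝ≥0∞)

noncomputable def pathWeight (t : ℕ) (w : Fin (t + 1) → Q) : ℝ≥0∞ :=
  μ (w 0) * ∏ j : Fin t, K (w j.castSucc) (w j.succ)

lemma pathWeight_snoc {t : ℕ} (w : Fin (t + 1) → Q) (q : Q) :
    pathWeight μ K (t + 1) (Fin.snoc w q) = pathWeight μ K t w * K (w (Fin.last t)) q := by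
  simp [pathWeight, Fin.prod_univ_castSucc, mul_assoc, Fin.succ_castSucc, -Fin.castSucc_succ]

lemma pathWeight_cons {t : ℕ} (q : Q) (w : Fin (t + 1) → Q) :
    pathWeight μ K (t + 1) (Fin.cons q w) =
      μ q * K q (w 0) * ∏ j : Fin t, K (w j.castSucc) (w j.succ) := by
  simp [pathWeight, Fin.prod_univ_succ, mul_assoc]

lemma tsum_pathWeight_mul_init (hK : ∀ q, ∑' q', K q q' = 1) {t : ℕ}
    (g : (Fin (t + 1) → Q) → ℝ≥0∞) :
    ∑' w : Fin (t + 2) → Q, pathWeight μ K (t + 1) w * g (Fin.init w) =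
      ∑' w, pathWeight μ K t w * g w := by
  rw [← (Fin.snocEquiv fun _ => Q).tsum_eq, ENNReal.tsum_prod', ENNReal.tsum_comm]
  refine tsum_congr fun w => ?_
  simp only [Fin.snocEquiv, Equiv.coe_fn_mk, Fin.init_snoc, pathWeight_snoc]
  rw [ENNReal.tsum_mul_right, ENNReal.tsum_mul_left, hK, mul_one]

lemma tsum_pathWeight_mul_tail (hμK : ∀ q', ∑' q, μ q * K q q' = μ q') {t : ℕ}
    (g : (Fin (t + 1) → Q) → ℝ≥0∞) :
    ∑' w : Fin (t + 2) → Q, pathWeight μ K (t + 1) w * g (Fin.tail w) =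
      ∑' w, pathWeight μ K t w * g w := by
  rw [← (Fin.consEquiv fun _ => Q).tsum_eq, ENNReal.tsum_prod', ENNReal.tsum_comm]
  refine tsum_congr fun w => ?_
  simp only [Fin.consEquiv, Equiv.coe_fn_mk, Fin.tail_cons, pathWeight_cons]
  rw [ENNReal.tsum_mul_right, ENNReal.tsum_mul_right, hμK, pathWeight]

lemma tsum_pathWeight (hμ : ∑' q, μ q = 1) (hK : ∀ q, ∑' q', K q q' = 1) (t : ℕ) :
    ∑' w : Fin (t + 1) → Q, pathWeight μ K t w = 1 := by
  induction t with
  | zero =>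
    rw [← (Equiv.funUnique (Fin 1) Q).symm.tsum_eq, ← hμ]
    simp [pathWeight]
  | succ t ih => simpa [ih] using tsum_pathWeight_mul_init μ K hK (t := t) 1

lemma tsum_pathWeight_mul_window (hK : ∀ q, ∑' q', K q q' = 1)
    (hμK : ∀ q', ∑' q, μ q * K q q' = μ q') {i m t : ℕ} (h : i + m ≤ t)
    (g : (Fin (m + 1) → Q) → ℝ≥0∞) :
    ∑' w : Fin (t + 1) → Q, pathWeight μ K t w * g (fun j => w ⟨i + j, by omega⟩) =
      ∑' u, pathWeight μ K m u * g u := by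
  induction t generalizing i with
  | zero =>
    obtain ⟨rfl, rfl⟩ : i = 0 ∧ m = 0 := by omega
    simp only [zero_add, Fin.eta]
  | succ t ih =>
    by_cases hinit : i + m ≤ t
    · rw [← ih hinit]
      exact tsum_pathWeight_mul_init μ K hK fun v => g fun j => v ⟨i + j, by omega⟩
    rcases i with _ | i
    · obtain rfl : m = t + 1 := by omega
      simp only [zero_add, Fin.eta]
    · rw [← ih (by omega : i + m ≤ t),
        ← tsum_pathWeight_mul_tail μ K hμK fun v => g fun j => v ⟨i + j, by omega⟩]
      congr! with w j
      simp only [Fin.tail, Fin.succ_mk, Nat.add_right_comm]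

end PathWeight

lemma hasSum_of_tsum_ofReal_ne_top {α : Type*} {F : α → ℝ} (hF : ∀ x, 0 ≤ F x)
    (h : ∑' x, ENNReal.ofReal (F x) ≠ ∞) :
    HasSum F (∑' x, ENNReal.ofReal (F x)).toReal := by
  rw [ENNReal.tsum_toReal_eq fun _ => ENNReal.ofReal_ne_top]
  simpa only [ENNReal.toReal_ofReal (hF _)] using ENNReal.hasSum_toReal h

lemma tsum_ofReal_eq_one {α : Type*} {F : α → ℝ} (hF : ∀ x, 0 ≤ F x) (h : ∑' x, F x = 1) :
    ∑' x, ENNReal.ofReal (F x) = 1 := by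
  have hs : Summable F := by
    by_contra hs
    simp [tsum_eq_zero_of_not_summable hs] at h
  rw [← ENNReal.ofReal_tsum_of_nonneg hF hs, h, ENNReal.ofReal_one]

section Transfer

variable {α β : Type*} {p : α → ℝ} {q : β → ℝ} {φ : α → β}

lemma hasSum_mul_comp_of_nonneg_of_le (hp : ∀ x, 0 ≤ p x) (hq : ∀ y, 0 ≤ q y)
    (hq_fin : ∑' y, ENNReal.ofReal (q y) ≠ ∞)
    (hφ : ∀ g : β → ℝ≥0∞,
      ∑' x, ENNReal.ofReal (p x) * g (φ x) = ∑' y, ENNReal.ofReal (q y) * g y)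
    {g : β → ℝ} {C : ℝ} (hg0 : ∀ y, 0 ≤ g y) (hgC : ∀ y, g y ≤ C) :
    HasSum (fun x => p x * g (φ x)) (∑' y, q y * g y) := by
  have hpush : ∑' x, ENNReal.ofReal (p x * g (φ x)) = ∑' y, ENNReal.ofReal (q y * g y) := by
    simp only [ENNReal.ofReal_mul (hp _), ENNReal.ofReal_mul (hq _)]
    exact hφ fun y => ENNReal.ofReal (g y)
  have hfin : ∑' y, ENNReal.ofReal (q y * g y) ≠ ∞ := by
    have hle :
        ∑' y, ENNReal.ofReal (q y * g y) ≤ ∑' y, ENNReal.ofReal (q y) * ENNReal.ofReal C :=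
      ENNReal.tsum_le_tsum fun y => by
        rw [ENNReal.ofReal_mul (hq y)]
        gcongr
        exact hgC y
    rw [ENNReal.tsum_mul_right] at hle
    exact ne_top_of_le_ne_top (ENNReal.mul_ne_top hq_fin ENNReal.ofReal_ne_top) hle
  rw [(hasSum_of_tsum_ofReal_ne_top (fun y => mul_nonneg (hq y) (hg0 y)) hfin).tsum_eq, ← hpush]
  exact hasSum_of_tsum_ofReal_ne_top (fun x => mul_nonneg (hp x) (hg0 _)) (hpush ▸ hfin)

lemma hasSum_mul_comp_of_mem_Icc (hp : ∀ x, 0 ≤ p x) (hq : ∀ y, 0 ≤ q y)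
    (hq_fin : ∑' y, ENNReal.ofReal (q y) ≠ ∞)
    (hφ : ∀ g : β → ℝ≥0∞,
      ∑' x, ENNReal.ofReal (p x) * g (φ x) = ∑' y, ENNReal.ofReal (q y) * g y)
    {g : β → ℝ} {a b : ℝ} (hg : ∀ y, g y ∈ Set.Icc a b) :
    HasSum (fun x => p x * g (φ x)) (∑' y, q y * g y) := by
  have hnonneg (y : β) : 0 ≤ g y - a := sub_nonneg.2 (hg y).1
  have hle (y : β) : g y - a ≤ b - a := sub_le_sub_right (hg y).2 a
  -- `φ = id` yields summability on the `q` side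
  have hid (g : β → ℝ≥0∞) :
      ∑' y, ENNReal.ofReal (q y) * g (id y) = ∑' y, ENNReal.ofReal (q y) * g y := rfl
  have hq_shift := hasSum_mul_comp_of_nonneg_of_le hq hq hq_fin hid hnonneg hle
  have hq_one := hasSum_mul_comp_of_nonneg_of_le hq hq hq_fin hid (fun _ => zero_le_one)
    fun _ => le_rfl
  have hp_shift := hasSum_mul_comp_of_nonneg_of_le hp hq hq_fin hφ hnonneg hle
  have hp_one := hasSum_mul_comp_of_nonneg_of_le hp hq hq_fin hφ (fun _ => zero_le_one)
    fun _ => le_rfl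
  convert hp_shift.add (hp_one.mul_left a) using 1
  · ext x
    ring
  · rw [← (hq_shift.add (hq_one.mul_left a)).tsum_eq]
    exact tsum_congr fun y => by rw [id]; ring

end Transfer

section RealChain

variable {Q : Type*} {π : Q → ℝ} {P : Q → Q → ℝ}

lemma pathProb_nonneg (hπnn : ∀ q, 0 ≤ π q) (hPnn : ∀ q q', 0 ≤ P q q') {t : ℕ} (ht : 1 ≤ t)
    (w : Fin t → Q) : 0 ≤ pathProb π P t ht w :=
  mul_nonneg (hπnn _) (Finset.prod_nonneg fun _ _ => hPnn _ _)

lemma ofReal_pathProb (hπnn : ∀ q, 0 ≤ π q) (hPnn : ∀ q q', 0 ≤ P q q') {t : ℕ}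
    (ht : 1 ≤ t + 1) (w : Fin (t + 1) → Q) :
    ENNReal.ofReal (pathProb π P (t + 1) ht w) =
      pathWeight (fun q => ENNReal.ofReal (π q)) (fun q q' => ENNReal.ofReal (P q q')) t w := by
  rw [pathProb, pathWeight, ENNReal.ofReal_mul (hπnn _),
    ENNReal.ofReal_prod_of_nonneg fun _ _ => hPnn _ _]
  rfl

lemma tsum_ofReal_mul_ofReal_of_stationary (hπnn : ∀ q, 0 ≤ π q) (hPnn : ∀ q q', 0 ≤ P q q')
    (hπ : ∑' q, ENNReal.ofReal (π q) ≠ ∞) (hP : ∀ q, ∑' q', ENNReal.ofReal (P q q') = 1)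
    (hstat : ∀ q', ∑' q, π q * P q q' = π q') (q' : Q) :
    ∑' q, ENNReal.ofReal (π q) * ENNReal.ofReal (P q q') = ENNReal.ofReal (π q') := by
  simp only [← ENNReal.ofReal_mul (hπnn _)]
  have hfin : ∑' q, ENNReal.ofReal (π q * P q q') ≠ ∞ := by
    refine ne_top_of_le_ne_top hπ (ENNReal.tsum_le_tsum fun q => ?_)
    rw [ENNReal.ofReal_mul (hπnn q)]
    exact mul_le_of_le_one_right' (hP q ▸ ENNReal.le_tsum q')
  rw [← hstat q', (hasSum_of_tsum_ofReal_ne_top (fun q => mul_nonneg (hπnn q) (hPnn q q'))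
    hfin).tsum_eq, ENNReal.ofReal_toReal hfin]

end RealChain

/-- fully explicit, measure-free form of unbiasedness. The
expectation of the sliding-window average over state paths of length `t`
(weighted by `π(q₁) ∏ P(q_j, q_{j+1})`) equals
`∑_{q^B ∈ Qⁿ} f(ℓ(q₁^B),…,ℓ(q_n^B)) · π(q₁^B) · ∏_{j=1}^{n-1} P(q_j^B, q_{j+1}^B)`. -/
theorem estimator_unbiased_explicit {Q σ : Type*}
    (P : Q → Q → ℝ) (π : Q → ℝ) (ℓ : Q → σ)
    (hPnn : ∀ q q', 0 ≤ P q q') (hProw : ∀ q, ∑' q', P q q' = 1)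
    (hπnn : ∀ q, 0 ≤ π q) (hπ1 : ∑' q, π q = 1)
    (hstat : ∀ q', ∑' q, π q * P q q' = π q')
    (n t : ℕ) (hn : 1 ≤ n) (hnt : n ≤ t)
    (a b : ℝ) (f : (Fin n → σ) → ℝ) (hf : ∀ v, f v ∈ Set.Icc a b) :
    (∑' w : Fin t → Q,
        pathProb π P t (by omega) w *
          ((((t - n + 1 : ℕ) : ℝ))⁻¹ *
            ∑ i : Fin (t - n + 1),
              f (fun j => ℓ (w ⟨i.val + j.val, by have := i.isLt; have := j.isLt; omega⟩))))
      = ∑' u : Fin n → Q,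
          f (fun j => ℓ (u j)) *
            (π (u ⟨0, hn⟩) *
              ∏ j : Fin (n - 1),
                P (u ⟨j.val, by have := j.isLt; omega⟩)
                  (u ⟨j.val + 1, by have := j.isLt; omega⟩)) := by
  obtain ⟨m, rfl⟩ : ∃ m, n = m + 1 := ⟨n - 1, by omega⟩
  obtain ⟨s, rfl⟩ : ∃ s, t = s + 1 := ⟨t - 1, by omega⟩
  have hμ := tsum_ofReal_eq_one hπnn hπ1
  have hK q := tsum_ofReal_eq_one (hPnn q) (hProw q)
  have hμK := tsum_ofReal_mul_ofReal_of_stationary hπnn hPnn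
    (ne_of_eq_of_ne hμ ENNReal.one_ne_top) hK hstat
  have hwindow : ∀ i : Fin (s + 1 - (m + 1) + 1),
      HasSum (fun w => pathProb π P (s + 1) (by omega) w *
          f (fun j => ℓ (w ⟨i.val + j.val, by have := i.isLt; have := j.isLt; omega⟩)))
        (∑' u, pathProb π P (m + 1) (by omega) u * f (fun j => ℓ (u j))) := by
    intro i
    refine hasSum_mul_comp_of_mem_Icc (pathProb_nonneg hπnn hPnn _) (pathProb_nonneg hπnn hPnn _)
      ?_ ?_ (g := fun u => f fun j => ℓ (u j)) fun u => hf _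
    · simp only [ofReal_pathProb hπnn hPnn, tsum_pathWeight _ _ hμ hK]
      exact ENNReal.one_ne_top
    · intro g
      simp only [ofReal_pathProb hπnn hPnn]
      exact tsum_pathWeight_mul_window _ _ hK hμK (by omega) g
  have hmean := (hasSum_sum (s := Finset.univ) fun i _ => hwindow i).mul_left
    ((s + 1 - (m + 1) + 1 : ℕ) : ℝ)⁻¹
  rw [Finset.sum_const, Finset.card_univ, Fintype.card_fin, nsmul_eq_mul,
    inv_mul_cancel_left₀ (by positivity)] at hmean
  convert hmean.tsum_eq using 1
  · exact tsum_congr fun w => by rw [mul_left_comm, Finset.mul_sum]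
  · exact tsum_congr fun u => mul_comm _ _
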